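/- arXiv:2510.00173 — 3 statements merged into one kernel-verified Lean document; each statement's English description precedes it below -/
import Mathlib

section
/- Let T > 0, τ₀ > 0, K > 0, and let τ : (0,T) → ℝ be differentiable with τ(t) ≥ τ₀ and |τ'(t)| ≤ K·τ(t)² for all t ∈ (0,T). Fix constants c₁ < 0, c₂ > 0, and s > 0, and define on (0,T): A*(t) = c₁τ(t), ζ*(t) = c₂τ(t), ρ₀ = e^{−sA*}(ζ*)^{−2}, ρ̂ = e^{−sA*}(ζ*)^{−3}. Then there exists C > 0 such that |ρ̂(t)·ρ̂'(t)| ≤ C·ρ₀(t)² for all t ∈ (0,T). -/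
/-- With `τ ≥ τ₀ > 0` and `|τ'| ≤ K τ²` on `(0,T)`, the weights
`ρ₀ = e^{-sA*}(ζ*)⁻²` and `ρ̂ = e^{-sA*}(ζ*)⁻³` satisfy `|ρ̂ ρ̂'| ≤ C ρ₀²` on `(0,T)`. -/
theorem stmt_7 (T τ₀ K : ℝ) (hT : 0 < T) (hτ₀ : 0 < τ₀) (hK : 0 < K)
    (τ τ' : ℝ → ℝ)
    (hτdiff : ∀ t ∈ Set.Ioo (0:ℝ) T, HasDerivAt τ (τ' t) t)
    (hτlb : ∀ t ∈ Set.Ioo (0:ℝ) T, τ₀ ≤ τ t)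
    (hτ' : ∀ t ∈ Set.Ioo (0:ℝ) T, |τ' t| ≤ K * (τ t) ^ 2)
    (c₁ c₂ s : ℝ) (hc₁ : c₁ < 0) (hc₂ : 0 < c₂) (hs : 0 < s)
    (Astar ζstar ρ₀ ρhat : ℝ → ℝ)
    (hAstar : ∀ t, Astar t = c₁ * τ t)
    (hζstar : ∀ t, ζstar t = c₂ * τ t)
    (hρ₀ : ∀ t, ρ₀ t = Real.exp (-(s * Astar t)) / (ζstar t) ^ 2)
    (hρhat : ∀ t, ρhat t = Real.exp (-(s * Astar t)) / (ζstar t) ^ 3) :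
    ∃ C > (0:ℝ), ∀ t ∈ Set.Ioo (0:ℝ) T,
      |ρhat t * deriv ρhat t| ≤ C * (ρ₀ t) ^ 2 := by
  have hc₁' : 0 < -c₁ := by linarith
  refine ⟨K * (s * (-c₁) + 3 / τ₀) / c₂ ^ 2, by positivity, ?_⟩
  intro t ht
  have ha : (0:ℝ) < τ t := lt_of_lt_of_le hτ₀ (hτlb t ht)
  have hc₂ne : c₂ ≠ 0 := ne_of_gt hc₂
  have hane : τ t ≠ 0 := ne_of_gt ha
  set a := τ t with haeq
  set b := τ' t with hbeq
  have hEpos : 0 < Real.exp (-(s * (c₁ * a))) := Real.exp_pos _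
  set E := Real.exp (-(s * (c₁ * a))) with hE
  have hfun : ρhat = fun u => Real.exp (-(s * (c₁ * τ u))) / (c₂ * τ u) ^ 3 := by
    funext u; rw [hρhat, hAstar, hζstar]
  have hnum : HasDerivAt (fun u => Real.exp (-(s * (c₁ * τ u))))
      (E * (-(s * (c₁ * b)))) t := by
    have := (((hτdiff t ht).const_mul c₁).const_mul s).neg.exp
    simpa [hE, mul_comm] using this
  have hden : HasDerivAt (fun u => (c₂ * τ u) ^ 3)
      (3 * (c₂ * a) ^ 2 * (c₂ * b)) t := by
    have := ((hτdiff t ht).const_mul c₂).pow 3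
    simpa [Pi.pow_def] using this
  have hdne : (c₂ * a) ^ 3 ≠ 0 := by positivity
  have hD : HasDerivAt ρhat
      ((E * (-(s * (c₁ * b))) * (c₂ * a) ^ 3
        - E * (3 * (c₂ * a) ^ 2 * (c₂ * b))) / ((c₂ * a) ^ 3) ^ 2) t := by
    rw [hfun]; exact hnum.div hden hdne
  rw [hD.deriv, hρhat, hρ₀, hAstar, hζstar, ← haeq, ← hE]
  have hLHS : E / (c₂ * a) ^ 3 *
      ((E * (-(s * (c₁ * b))) * (c₂ * a) ^ 3
        - E * (3 * (c₂ * a) ^ 2 * (c₂ * b))) / ((c₂ * a) ^ 3) ^ 2)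
      = E ^ 2 * (b * (-(s * c₁) * a - 3)) / (c₂ ^ 6 * a ^ 7) := by
    field_simp
  have hRHS : (E / (c₂ * a) ^ 2) ^ 2 = E ^ 2 / (c₂ ^ 4 * a ^ 4) := by
    field_simp
  rw [hLHS, hRHS]
  have hX : |b * (-(s * c₁) * a - 3)| ≤ K * a ^ 2 * (s * (-c₁) * a + 3) := by
    rw [abs_mul]
    have h1 : |b| ≤ K * a ^ 2 := hτ' t ht
    have h2 : |(-(s * c₁) * a - 3)| ≤ s * (-c₁) * a + 3 := by
      have hpos : 0 < -(s * c₁) * a := by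
        rw [show -(s * c₁) * a = s * (-c₁) * a by ring]; positivity
      rw [sub_eq_add_neg]
      refine (abs_add_le _ _).trans ?_
      rw [abs_neg, abs_of_pos hpos]
      norm_num
    exact mul_le_mul h1 h2 (abs_nonneg _) (by positivity)
  rw [abs_div, abs_of_pos (show (0:ℝ) < c₂ ^ 6 * a ^ 7 by positivity), abs_mul,
    abs_of_pos (show (0:ℝ) < E ^ 2 by positivity), mul_div_assoc',
    div_le_div_iff₀ (by positivity) (by positivity)]
  have h3a : 3 / τ₀ ≥ 3 / a := by
    apply div_le_div_of_nonneg_left (by norm_num) hτ₀ (hτlb t ht)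
  have key : K * a ^ 2 * (s * (-c₁) * a + 3) ≤ K * (s * (-c₁) + 3 / τ₀) / c₂ ^ 2 * (c₂ ^ 2 * a ^ 3) := by
    have : K * (s * (-c₁) + 3 / τ₀) / c₂ ^ 2 * (c₂ ^ 2 * a ^ 3)
        = K * (s * (-c₁) + 3 / τ₀) * a ^ 3 := by field_simp
    rw [this]
    have h1 : K * a ^ 2 * (s * (-c₁) * a + 3) = K * (s * (-c₁) + 3 / a) * a ^ 3 := by
      field_simp
    rw [h1]
    have : s * (-c₁) + 3 / a ≤ s * (-c₁) + 3 / τ₀ := by linarith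
    exact mul_le_mul_of_nonneg_right (mul_le_mul_of_nonneg_left this hK.le) (by positivity)
  calc E ^ 2 * |b * (-(s * c₁) * a - 3)| * (c₂ ^ 4 * a ^ 4)
      ≤ E ^ 2 * (K * a ^ 2 * (s * (-c₁) * a + 3)) * (c₂ ^ 4 * a ^ 4) := by
        have := mul_le_mul_of_nonneg_right (mul_le_mul_of_nonneg_left hX (le_of_lt (show (0:ℝ) < E ^ 2 by positivity))) (le_of_lt (show (0:ℝ) < c₂ ^ 4 * a ^ 4 by positivity))
        linarith
    _ ≤ E ^ 2 * (K * (s * (-c₁) + 3 / τ₀) / c₂ ^ 2 * (c₂ ^ 2 * a ^ 3)) * (c₂ ^ 4 * a ^ 4) := by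
        have := mul_le_mul_of_nonneg_right (mul_le_mul_of_nonneg_left key (le_of_lt (show (0:ℝ) < E ^ 2 by positivity))) (le_of_lt (show (0:ℝ) < c₂ ^ 4 * a ^ 4 by positivity))
        linarith
    _ = K * (s * (-c₁) + 3 / τ₀) / c₂ ^ 2 * E ^ 2 * (c₂ ^ 6 * a ^ 7) := by ring
end

section
/- Let T > 0, τ₀ > 0, K > 0, and let τ : (0,T) → ℝ be differentiable with τ(t) ≥ τ₀ and |τ'(t)| ≤ K·τ(t)² for all t ∈ (0,T). Fix constants c₁ < 0, c₂ > 0, and s > 0, and define on (0,T): A*(t) = c₁τ(t), ζ*(t) = c₂τ(t), ρ₁ = e^{−sA*}(ζ*)^{−4}, ρ̂ = e^{−sA*}(ζ*)^{−3}. Then there exists C > 0 such that |(ρ₁²)'(t)| ≤ C·ρ̂(t)² for all t ∈ (0,T), where (ρ₁²)' denotes the derivative of t ↦ ρ₁(t)². -/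
/-- With `τ ≥ τ₀ > 0` and `|τ'| ≤ K τ²` on `(0,T)`, the weights
`ρ₁ = e^{-sA*}(ζ*)⁻⁴` and `ρ̂ = e^{-sA*}(ζ*)⁻³` satisfy `|(ρ₁²)'| ≤ C ρ̂²` on `(0,T)`. -/
theorem stmt_8 (T τ₀ K : ℝ) (hT : 0 < T) (hτ₀ : 0 < τ₀) (hK : 0 < K)
    (τ τ' : ℝ → ℝ)
    (hτdiff : ∀ t ∈ Set.Ioo (0:ℝ) T, HasDerivAt τ (τ' t) t)
    (hτlb : ∀ t ∈ Set.Ioo (0:ℝ) T, τ₀ ≤ τ t)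
    (hτ' : ∀ t ∈ Set.Ioo (0:ℝ) T, |τ' t| ≤ K * (τ t) ^ 2)
    (c₁ c₂ s : ℝ) (hc₁ : c₁ < 0) (hc₂ : 0 < c₂) (hs : 0 < s)
    (Astar ζstar ρ₁ ρhat : ℝ → ℝ)
    (hAstar : ∀ t, Astar t = c₁ * τ t)
    (hζstar : ∀ t, ζstar t = c₂ * τ t)
    (hρ₁ : ∀ t, ρ₁ t = Real.exp (-(s * Astar t)) / (ζstar t) ^ 4)
    (hρhat : ∀ t, ρhat t = Real.exp (-(s * Astar t)) / (ζstar t) ^ 3) :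
    ∃ C > (0:ℝ), ∀ t ∈ Set.Ioo (0:ℝ) T,
      |deriv (fun u => (ρ₁ u) ^ 2) t| ≤ C * (ρhat t) ^ 2 := by
  have hsc : 0 < -(s*c₁) := by nlinarith
  refine ⟨2*K*((-(s*c₁))*τ₀ + 4)/(c₂^2*τ₀), ?_, ?_⟩
  · apply div_pos
    · nlinarith [mul_pos hK (mul_pos hsc hτ₀)]
    · positivity
  intro t ht
  have hx : 0 < τ t := lt_of_lt_of_le hτ₀ (hτlb t ht)
  have hxne : τ t ≠ 0 := ne_of_gt hx
  have hc₂ne : c₂ ≠ 0 := ne_of_gt hc₂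
  have hB : c₂ * τ t ≠ 0 := mul_ne_zero hc₂ne hxne
  have hB4 : (c₂ * τ t)^4 ≠ 0 := pow_ne_zero _ hB
  have h1 := hτdiff t ht
  have h2 : HasDerivAt (fun u => -(s * (c₁ * τ u))) (-(s * (c₁ * τ' t))) t := by
    simpa using (((h1.const_mul c₁).const_mul s).fun_neg)
  have h3 : HasDerivAt (fun u => Real.exp (-(s * (c₁ * τ u))))
      (Real.exp (-(s * (c₁ * τ t))) * (-(s * (c₁ * τ' t)))) t := h2.exp
  have h4 : HasDerivAt (fun u => (c₂ * τ u)^4) ((4:ℕ) * (c₂ * τ t)^3 * (c₂ * τ' t)) t := by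
    simpa using ((h1.const_mul c₂).fun_pow 4)
  have h5 := h3.fun_div h4 hB4
  have h6 := h5.fun_pow 2
  have hfun : (fun u => (ρ₁ u) ^ 2)
      = fun u => (Real.exp (-(s * (c₁ * τ u))) / (c₂ * τ u)^4)^2 := by
    funext u; rw [hρ₁, hAstar, hζstar]
  rw [hfun, h6.deriv]
  set q : ℝ := 2 * τ' t * ((-(s*c₁)) * τ t - 4) / (c₂^2 * (τ t)^3) with hq
  have key : (2:ℕ) * (Real.exp (-(s * (c₁ * τ t))) / (c₂ * τ t)^4) ^ 1 *
      ((Real.exp (-(s * (c₁ * τ t))) * (-(s * (c₁ * τ' t))) * (c₂ * τ t)^4 -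
        Real.exp (-(s * (c₁ * τ t))) * ((4:ℕ) * (c₂ * τ t)^3 * (c₂ * τ' t))) /
        ((c₂ * τ t)^4)^2)
      = (ρhat t)^2 * q := by
    rw [hρhat, hAstar, hζstar, hq]
    field_simp
    ring
  rw [key, abs_mul, abs_of_nonneg (sq_nonneg (ρhat t))]
  rw [mul_comm ((2*K*((-(s*c₁))*τ₀ + 4)/(c₂^2*τ₀))) ((ρhat t)^2)]
  apply mul_le_mul_of_nonneg_left _ (sq_nonneg (ρhat t))
  have hτ'le := hτ' t ht
  have hxlb := hτlb t ht
  have habs : |q| ≤ 2 * (K * (τ t)^2) * ((-(s*c₁)) * τ t + 4) / (c₂^2 * (τ t)^3) := by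
    rw [hq, abs_div, abs_of_pos (by positivity : (0:ℝ) < c₂^2 * (τ t)^3)]
    apply div_le_div_of_nonneg_right _ (by positivity)
    rw [abs_mul, abs_mul]
    have h2' : |(2:ℝ)| = 2 := by norm_num
    rw [h2']
    have hb : |(-(s*c₁)) * τ t - 4| ≤ (-(s*c₁)) * τ t + 4 := by
      have := abs_sub (((-(s*c₁)) * τ t)) (4:ℝ)
      rw [abs_of_nonneg (by nlinarith : (0:ℝ) ≤ (-(s*c₁)) * τ t)] at this
      simpa using this
    have h1' : 0 ≤ |τ' t| := abs_nonneg _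
    nlinarith [abs_nonneg ((-(s*c₁)) * τ t - 4)]
  refine habs.trans ?_
  rw [div_le_div_iff₀ (by positivity) (by positivity)]
  nlinarith [mul_nonneg (mul_nonneg (mul_nonneg hK.le (sq_nonneg c₂)) (sq_nonneg (τ t))) (sub_nonneg.mpr hxlb), sq_nonneg (τ t), sq_nonneg c₂]
end

section
/- Let α ∈ (0,1) and let f : [0,1] → ℝ be continuous on [0,1], continuously differentiable on (0,1), with f(1) = 0, and such that s ↦ s^α·f'(s)² is integrable on (0,1). Then for every x ∈ [0,1]: f(x)² ≤ (1/(1−α))·∫₀¹ s^α f'(s)² ds. -/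
open MeasureTheory Set Topology Filter

/-- Weighted Sobolev embedding `H¹_a(0,1) ↪ L^∞(0,1)` for `a x = x^α`,
`α ∈ (0,1)`: `f(x)² ≤ (1/(1-α)) ∫₀¹ s^α f'(s)² ds` for `f` continuous on `[0,1]`,
`C¹` on `(0,1)` with `f 1 = 0`. -/
theorem stmt_13 (α : ℝ) (hα0 : 0 < α) (hα1 : α < 1)
    (f f' : ℝ → ℝ)
    (hf_cont : ContinuousOn f (Set.Icc (0:ℝ) 1))
    (hf_deriv : ∀ x ∈ Set.Ioo (0:ℝ) 1, HasDerivAt f (f' x) x)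
    (hf'_cont : ContinuousOn f' (Set.Ioo (0:ℝ) 1))
    (hf1 : f 1 = 0)
    (hint : MeasureTheory.IntegrableOn (fun s => s ^ α * (f' s) ^ 2) (Set.Ioo (0:ℝ) 1)) :
    ∀ x ∈ Set.Icc (0:ℝ) 1,
      (f x) ^ 2 ≤ (1 / (1 - α)) * ∫ s in Set.Ioo (0:ℝ) 1, s ^ α * (f' s) ^ 2 := by
  have h1α : (0:ℝ) < 1 - α := by linarith
  set I := ∫ s in Set.Ioo (0:ℝ) 1, s ^ α * (f' s) ^ 2 with hIdef
  have hInn : 0 ≤ I := by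
    apply setIntegral_nonneg measurableSet_Ioo
    intro s hs
    exact mul_nonneg (Real.rpow_nonneg hs.1.le _) (sq_nonneg _)
  set C := (1 / (1 - α)) * I with hCdef
  have hCnn : 0 ≤ C := mul_nonneg (by positivity) hInn
  -- Key estimate on subintervals of (0,1)
  have key : ∀ x ∈ Set.Ioo (0:ℝ) 1, ∀ y ∈ Set.Ico x 1, (f x - f y) ^ 2 ≤ C := by
    intro x hx y hy
    have hxy : x ≤ y := hy.1
    have hsub : Set.Icc x y ⊆ Set.Ioo (0:ℝ) 1 :=
      fun s hs => ⟨lt_of_lt_of_le hx.1 hs.1, lt_of_le_of_lt hs.2 hy.2⟩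
    have hsubIoc : Set.Ioc x y ⊆ Set.Ioo (0:ℝ) 1 :=
      fun s hs => hsub ⟨hs.1.le, hs.2⟩
    -- FTC
    have hftc : f y - f x = ∫ s in x..y, f' s := by
      refine (intervalIntegral.integral_eq_sub_of_hasDerivAt (fun t ht => ?_) ?_).symm
      · exact hf_deriv t (hsub (by rwa [Set.uIcc_of_le hxy] at ht))
      · exact (hf'_cont.mono hsub).intervalIntegrable_of_Icc hxy
    -- the two L² pieces
    set A := ∫ s in Set.Ioc x y, s ^ (-α) with hAdef
    set B := ∫ s in Set.Ioc x y, s ^ α * (f' s) ^ 2 with hBdef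
    have hAnn : 0 ≤ A := by
      apply setIntegral_nonneg measurableSet_Ioc
      intro s hs
      exact Real.rpow_nonneg (lt_of_lt_of_le hx.1 hs.1.le).le _
    have hBnn : 0 ≤ B := by
      apply setIntegral_nonneg measurableSet_Ioc
      intro s hs
      exact mul_nonneg (Real.rpow_nonneg (lt_of_lt_of_le hx.1 hs.1.le).le _) (sq_nonneg _)
    -- Cauchy–Schwarz
    have hconj : Real.HolderConjugate 2 2 := ⟨by norm_num, by norm_num, by norm_num⟩
    set g : ℝ → ℝ := fun s => s ^ (-(α/2)) with hgdef
    set h : ℝ → ℝ := fun s => s ^ (α/2) * |f' s| with hhdef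
    have hμ : ∀ᵐ s ∂(volume.restrict (Set.Ioc x y)), s ∈ Set.Ioc x y :=
      ae_restrict_mem measurableSet_Ioc
    have hgm : AEStronglyMeasurable g (volume.restrict (Set.Ioc x y)) := by
      refine ContinuousOn.aestronglyMeasurable ?_ measurableSet_Ioc
      exact continuousOn_id.rpow_const fun s hs =>
        Or.inl (ne_of_gt (lt_of_lt_of_le hx.1 hs.1.le))
    have hhm : AEStronglyMeasurable h (volume.restrict (Set.Ioc x y)) := by
      refine ContinuousOn.aestronglyMeasurable ?_ measurableSet_Ioc
      exact (continuousOn_id.rpow_const fun s hs =>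
        Or.inl (ne_of_gt (lt_of_lt_of_le hx.1 hs.1.le))).mul
        ((hf'_cont.mono hsubIoc).abs)
    have hgsq : Integrable (fun s => g s ^ 2) (volume.restrict (Set.Ioc x y)) := by
      have : IntegrableOn (fun s => g s ^ 2) (Set.Icc x y) := by
        apply ContinuousOn.integrableOn_Icc
        exact (continuousOn_id.rpow_const fun s hs =>
          Or.inl (ne_of_gt (lt_of_lt_of_le hx.1 hs.1))).pow 2
      exact this.mono_set Set.Ioc_subset_Icc_self
    have hhsq : Integrable (fun s => h s ^ 2) (volume.restrict (Set.Ioc x y)) := by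
      have h0 : IntegrableOn (fun s => s ^ α * (f' s) ^ 2) (Set.Ioc x y) :=
        hint.mono_set hsubIoc
      refine h0.congr_fun ?_ measurableSet_Ioc
      intro s hs
      have hs0 : (0:ℝ) < s := lt_of_lt_of_le hx.1 hs.1.le
      simp only [hhdef, mul_pow, sq_abs]
      rw [← Real.rpow_natCast (s ^ (α/2)) 2, ← Real.rpow_mul hs0.le]
      norm_num
    have hgmem : MemLp g (ENNReal.ofReal 2) (volume.restrict (Set.Ioc x y)) := by
      rw [show ENNReal.ofReal 2 = 2 by norm_num]
      exact (memLp_two_iff_integrable_sq hgm).mpr hgsq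
    have hhmem : MemLp h (ENNReal.ofReal 2) (volume.restrict (Set.Ioc x y)) := by
      rw [show ENNReal.ofReal 2 = 2 by norm_num]
      exact (memLp_two_iff_integrable_sq hhm).mpr hhsq
    have hgnn : 0 ≤ᵐ[volume.restrict (Set.Ioc x y)] g := by
      filter_upwards [hμ] with s hs
      exact Real.rpow_nonneg (lt_of_lt_of_le hx.1 hs.1.le).le _
    have hhnn : 0 ≤ᵐ[volume.restrict (Set.Ioc x y)] h := by
      filter_upwards [hμ] with s hs
      exact mul_nonneg (Real.rpow_nonneg (lt_of_lt_of_le hx.1 hs.1.le).le _) (abs_nonneg _)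
    have hCS := integral_mul_le_Lp_mul_Lq_of_nonneg hconj hgnn hhnn hgmem hhmem
    -- rewrite the three integrals
    have e1 : ∫ s in Set.Ioc x y, g s * h s = ∫ s in Set.Ioc x y, |f' s| := by
      refine setIntegral_congr_fun measurableSet_Ioc fun s hs => ?_
      have hs0 : (0:ℝ) < s := hx.1.trans hs.1
      simp only [hgdef, hhdef]
      rw [← mul_assoc, ← Real.rpow_add hs0]
      norm_num
    have e2 : ∫ s in Set.Ioc x y, g s ^ (2:ℝ) = A := by
      refine setIntegral_congr_fun measurableSet_Ioc fun s hs => ?_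
      have hs0 : (0:ℝ) < s := hx.1.trans hs.1
      simp only [hgdef]
      rw [← Real.rpow_mul hs0.le]
      norm_num
    have e3 : ∫ s in Set.Ioc x y, h s ^ (2:ℝ) = B := by
      refine setIntegral_congr_fun measurableSet_Ioc fun s hs => ?_
      have hs0 : (0:ℝ) < s := hx.1.trans hs.1
      simp only [hhdef]
      rw [Real.mul_rpow (Real.rpow_nonneg hs0.le _) (abs_nonneg _),
        ← Real.rpow_mul hs0.le, Real.rpow_two, sq_abs]
      norm_num
    rw [e1, e2, e3] at hCS
    -- abs of the FTC integral
    have habs : |f x - f y| ≤ ∫ s in Set.Ioc x y, |f' s| := by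
      rw [abs_sub_comm, hftc]
      calc |∫ s in x..y, f' s| ≤ ∫ s in x..y, |f' s| :=
            intervalIntegral.abs_integral_le_integral_abs hxy
        _ = ∫ s in Set.Ioc x y, |f' s| := intervalIntegral.integral_of_le hxy
    have hIabs : 0 ≤ ∫ s in Set.Ioc x y, |f' s| :=
      setIntegral_nonneg measurableSet_Ioc fun s _ => abs_nonneg _
    -- bounds on A and B
    have hA_le : A ≤ 1 / (1 - α) := by
      have hint_big : IntegrableOn (fun s : ℝ => s ^ (-α)) (Set.Ioc (0:ℝ) 1) := by
        have := intervalIntegral.intervalIntegrable_rpow' (a := (0:ℝ)) (b := 1)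
          (r := -α) (by linarith)
        rw [intervalIntegrable_iff_integrableOn_Ioc_of_le (by norm_num)] at this
        exact this
      have hmono : A ≤ ∫ s in Set.Ioc (0:ℝ) 1, s ^ (-α) := by
        apply setIntegral_mono_set hint_big
        · filter_upwards [ae_restrict_mem measurableSet_Ioc] with s hs
          exact Real.rpow_nonneg hs.1.le _
        · exact HasSubset.Subset.eventuallyLE fun s hs =>
            ⟨lt_of_lt_of_le hx.1 hs.1.le, le_trans hs.2 hy.2.le⟩
      have hval : ∫ s in Set.Ioc (0:ℝ) 1, s ^ (-α) = 1 / (1 - α) := by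
        rw [← intervalIntegral.integral_of_le (by norm_num : (0:ℝ) ≤ 1)]
        rw [integral_rpow (Or.inl (by linarith))]
        rw [Real.one_rpow, Real.zero_rpow (by linarith)]
        ring
      rw [hval] at hmono; exact hmono
    have hB_le : B ≤ I := by
      apply setIntegral_mono_set hint
      · filter_upwards [ae_restrict_mem measurableSet_Ioo] with s hs
        exact mul_nonneg (Real.rpow_nonneg hs.1.le _) (sq_nonneg _)
      · exact HasSubset.Subset.eventuallyLE hsubIoc
    -- put it together
    have hsq : (f x - f y) ^ 2 ≤ (A ^ ((1:ℝ)/2) * B ^ ((1:ℝ)/2)) ^ 2 := by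
      rw [← sq_abs]
      exact pow_le_pow_left₀ (abs_nonneg _) (le_trans habs hCS) 2
    have hprod : (A ^ ((1:ℝ)/2) * B ^ ((1:ℝ)/2)) ^ 2 = A * B := by
      rw [mul_pow, ← Real.rpow_natCast (A ^ ((1:ℝ)/2)) 2, ← Real.rpow_natCast (B ^ ((1:ℝ)/2)) 2,
        ← Real.rpow_mul hAnn, ← Real.rpow_mul hBnn]
      norm_num
    calc (f x - f y) ^ 2 ≤ A * B := by rw [← hprod]; exact hsq
      _ ≤ (1 / (1 - α)) * I :=
          mul_le_mul hA_le hB_le hBnn (by positivity)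
  -- pass to the limit y → 1⁻
  have key2 : ∀ x ∈ Set.Ioo (0:ℝ) 1, (f x) ^ 2 ≤ C := by
    intro x hx
    have hne : (𝓝[Set.Ioo x 1] (1:ℝ)).NeBot := right_nhdsWithin_Ioo_neBot hx.2
    have hsub : Set.Ioo x 1 ⊆ Set.Icc (0:ℝ) 1 :=
      fun y hy => ⟨(hx.1.trans hy.1).le, hy.2.le⟩
    have htend : Filter.Tendsto (fun y => (f x - f y) ^ 2) (𝓝[Set.Ioo x 1] 1)
        (𝓝 ((f x) ^ 2)) := by
      have h1 : Filter.Tendsto f (𝓝[Set.Ioo x 1] 1) (𝓝 (f 1)) :=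
        (hf_cont 1 (by norm_num)).mono_left (nhdsWithin_mono 1 hsub)
      rw [hf1] at h1
      simpa using (tendsto_const_nhds.sub h1).pow 2
    exact le_of_tendsto htend (Filter.eventually_of_mem self_mem_nhdsWithin
      fun y hy => key x hx y ⟨hy.1.le, hy.2⟩)
  intro x hx
  rcases eq_or_lt_of_le hx.1 with h0 | h0
  · -- x = 0, limit from the right
    have hne : (𝓝[Set.Ioo (0:ℝ) 1] (0:ℝ)).NeBot := left_nhdsWithin_Ioo_neBot one_pos
    have hsub : Set.Ioo (0:ℝ) 1 ⊆ Set.Icc (0:ℝ) 1 := Set.Ioo_subset_Icc_self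
    have htend : Filter.Tendsto (fun y => (f y) ^ 2) (𝓝[Set.Ioo (0:ℝ) 1] 0)
        (𝓝 ((f 0) ^ 2)) := by
      have h1 : Filter.Tendsto f (𝓝[Set.Ioo (0:ℝ) 1] 0) (𝓝 (f 0)) :=
        (hf_cont 0 (by norm_num)).mono_left (nhdsWithin_mono 0 hsub)
      exact h1.pow 2
    have := le_of_tendsto htend (Filter.eventually_of_mem self_mem_nhdsWithin
      fun y hy => key2 y hy)
    rwa [← h0]
  · rcases eq_or_lt_of_le hx.2 with h1 | h1
    · rw [h1, hf1]; simpa using hCnn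
    · exact key2 x ⟨h0, h1⟩
end
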